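/- Let (M,ω) be a 2n-dimensional symplectic manifold with Poisson bracket {·,·} and let θ₁,…,θ_{2k} satisfy dθ₁ ∧ ⋯ ∧ dθ_{2k} ≠ 0 and invertibility of ({θᵢ,θⱼ}). Then the Dirac bracket {f,g}_D = {f,g} − {f,θᵢ}c_{ij}{θⱼ,g} is characterized (up to the factor n−k) by the form identity: (n−k) df ∧ dg ∧ dθ₁ ∧ ⋯ ∧ dθ_{2k} ∧ ω^{n−k−1} = {f,g}_D · dθ₁ ∧ ⋯ ∧ dθ_{2k} ∧ ω^{n−k}. -/

import Mathlib

set_option synthInstance.maxHeartbeats 1000000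

noncomputable section
open ExteriorAlgebra

/-!
STATEMENT 10: characterization of the Dirac bracket by the form identity
  (n−k) df ∧ dg ∧ dθ₁ ∧ ⋯ ∧ dθ_{2k} ∧ ω^{n−k−1}
      = {f,g}_D · dθ₁ ∧ ⋯ ∧ dθ_{2k} ∧ ω^{n−k}.

As sanctioned by the context, this is formalized pointwise on the (standard, by
Darboux) symplectic vector space ℝ^{2n}, modeled as V = (Fin n → ℝ) × (Fin n → ℝ)
(p-coordinates first), with ω = Σⱼ dpⱼ ∧ dqⱼ.  Covectors φ, γ, ϑᵢ are the
differentials of f, g, θᵢ at the given point; `sharp φ` is the Hamiltonian vector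
of φ (characterized by ι_{sharp φ} ω = −φ), and the Poisson bracket of two
covectors is {φ,ψ} = ψ(sharp φ); the Dirac bracket is
{φ,γ}_D = {φ,γ} − Σ_{i,j} {φ,ϑᵢ} c_{ij} {ϑⱼ,γ} with c the inverse of
C = ({ϑᵢ,ϑⱼ}).
-/

variable (n : ℕ)

abbrev V (n : ℕ) := (Fin n → ℝ) × (Fin n → ℝ)

def dp (j : Fin n) : Module.Dual ℝ (V n) :=
  (LinearMap.proj j).comp (LinearMap.fst ℝ (Fin n → ℝ) (Fin n → ℝ))

def dq (j : Fin n) : Module.Dual ℝ (V n) :=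
  (LinearMap.proj j).comp (LinearMap.snd ℝ (Fin n → ℝ) (Fin n → ℝ))

/-- the standard symplectic form ω = Σⱼ dpⱼ ∧ dqⱼ, as a constant 2-form -/
def omega : ExteriorAlgebra ℝ (Module.Dual ℝ (V n)) :=
  ∑ j, ExteriorAlgebra.ι ℝ (dp n j) * ExteriorAlgebra.ι ℝ (dq n j)

/-- Hamiltonian vector of a covector φ : the unique X with ι_X ω = −φ -/
def sharp (φ : Module.Dual ℝ (V n)) : V n :=
  (fun j => -φ (0, Pi.single j 1), fun j => φ (Pi.single j 1, 0))

/-- pointwise Poisson bracket of two covectors: {φ,ψ} = ψ(X_φ) -/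
def pb (φ ψ : Module.Dual ℝ (V n)) : ℝ := ψ (sharp n φ)

open CliffordAlgebra (contractLeft contractLeft_ι_mul)

/-!
Let `X` be the Hamiltonian vector of `μ = φ - {φ,ϑᵢ} cᵢⱼ ϑⱼ`. The relation `c C = 1` makes `X`
tangent to the constraints (`ϑₗ(X) = 0`), while `γ(X) = {φ,γ}_D` and `ι_X ω = -μ`, and `μ ≡ φ`
modulo the `ϑⱼ`. Contracting `X` into the `(2n+1)`-form `γ ∧ ϑ₁ ∧ ⋯ ∧ ϑ_{2k} ∧ ω^{n-k}`, which
vanishes for degree reasons, gives the identity.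
-/

namespace ExteriorAlgebra

variable {R M : Type*} [CommRing R] [AddCommGroup M] [Module R M]

theorem ι_mul_ι_anticomm (a b : M) : ι R a * ι R b = -(ι R b * ι R a) :=
  eq_neg_of_add_eq_zero_left (ι_add_mul_swap a b)

theorem ιMulti_mul_ι {N : ℕ} (v : Fin N → M) (w : M) :
    ιMulti R N v * ι R w = (-1 : R) ^ N • (ι R w * ιMulti R N v) := by
  induction N with
  | zero => simp
  | succ N ih =>
    rw [ιMulti_succ_apply, mul_assoc, ih, mul_smul_comm, ← mul_assoc, ι_mul_ι_anticomm,
      pow_succ', mul_smul, neg_mul, neg_one_smul, smul_neg, mul_assoc]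

theorem mul_ι_of_mem_exteriorPower {N : ℕ} {x : ExteriorAlgebra R M} (hx : x ∈ ⋀[R]^N M)
    (w : M) : x * ι R w = (-1 : R) ^ N • (ι R w * x) := by
  rw [← ιMulti_span_fixedDegree] at hx
  induction hx using Submodule.span_induction with
  | mem _ h => obtain ⟨v, rfl⟩ := h; exact ιMulti_mul_ι v w
  | zero => simp
  | add x y _ _ hx hy => rw [add_mul, mul_add, hx, hy, smul_add]
  | smul r x _ hx => rw [smul_mul_assoc, hx, mul_smul_comm, smul_comm]

theorem ιMulti_mul_ι_eq_zero_of_mem_span {N : ℕ} (v : Fin N → M) {w : M}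
    (hw : w ∈ Submodule.span R (Set.range v)) : ιMulti R N v * ι R w = 0 := by
  induction hw using Submodule.span_induction with
  | mem _ h =>
    obtain ⟨i, rfl⟩ := h
    rw [ιMulti_mul_ι, ιMulti_apply, ι_mul_prod_list, smul_zero]
  | zero => simp
  | add x y _ _ hx hy => rw [map_add, mul_add, hx, hy, add_zero]
  | smul r x _ hx => rw [map_smul, mul_smul_comm, hx, smul_zero]

variable (d : Module.Dual R M)

theorem contractLeft_ιMulti_mul {N : ℕ} (v : Fin N → M) (y : ExteriorAlgebra R M) :
    contractLeft d (ιMulti R N v * y) =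
      contractLeft d (ιMulti R N v) * y + (-1 : R) ^ N • (ιMulti R N v * contractLeft d y) := by
  induction N with
  | zero => simp [CliffordAlgebra.contractLeft_one]
  | succ N ih =>
    simp only [ιMulti_succ_apply, mul_assoc, contractLeft_ι_mul, ih, pow_succ']
    simp only [mul_add, sub_mul, mul_smul_comm, smul_mul_assoc, mul_assoc]
    module

theorem contractLeft_mul_of_mem_exteriorPower {N : ℕ} {x : ExteriorAlgebra R M}
    (hx : x ∈ ⋀[R]^N M) (y : ExteriorAlgebra R M) :
    contractLeft d (x * y) = contractLeft d x * y + (-1 : R) ^ N • (x * contractLeft d y) := by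
  rw [← ιMulti_span_fixedDegree] at hx
  induction hx using Submodule.span_induction with
  | mem _ h => obtain ⟨v, rfl⟩ := h; exact contractLeft_ιMulti_mul d v y
  | zero => simp
  | add x y' _ _ hx hy => simp only [add_mul, map_add, hx, hy, smul_add]; abel
  | smul r x _ hx => rw [smul_mul_assoc, map_smul, hx, map_smul, smul_add, smul_mul_assoc,
      smul_mul_assoc, smul_comm]

theorem contractLeft_ι_mul_ι (a b : M) :
    contractLeft d (ι R a * ι R b) = d a • ι R b - d b • ι R a := by
  rw [contractLeft_ι_mul, CliffordAlgebra.contractLeft_ι, ← Algebra.commutes, ← Algebra.smul_def]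

theorem contractLeft_ιMulti_eq_zero {N : ℕ} {v : Fin N → M} (hv : ∀ i, d (v i) = 0) :
    contractLeft d (ιMulti R N v) = 0 := by
  induction N with
  | zero => simp [CliffordAlgebra.contractLeft_one]
  | succ N ih =>
    rw [ιMulti_succ_apply, contractLeft_ι_mul, hv, ih (v := Matrix.vecTail v) fun i => hv i.succ,
      zero_smul, mul_zero, sub_zero]

theorem contractLeft_pow_succ_of_mem_exteriorPower_two {x : ExteriorAlgebra R M}
    (hx : x ∈ ⋀[R]^2 M) (hc : Commute x (contractLeft d x)) (m : ℕ) :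
    contractLeft d (x ^ (m + 1)) = (m + 1) • (contractLeft d x * x ^ m) := by
  induction m with
  | zero => simp
  | succ m ih =>
    rw [pow_succ', contractLeft_mul_of_mem_exteriorPower d hx, ih, neg_one_sq, one_smul,
      mul_smul_comm, ← mul_assoc, hc.eq, mul_assoc, ← pow_succ', succ_nsmul' _ (m + 1)]

end ExteriorAlgebra

theorem exteriorPower.eq_bot_of_finrank_lt {K M : Type*} [Field K] [AddCommGroup M] [Module K M]
    [FiniteDimensional K M] {N : ℕ} (h : Module.finrank K M < N) : ⋀[K]^N M = ⊥ := by
  rw [← Submodule.finrank_eq_zero, exteriorPower.finrank_eq, Nat.choose_eq_zero_of_lt h]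

def sharpₗ : Module.Dual ℝ (V n) →ₗ[ℝ] V n where
  toFun := sharp n
  map_add' φ ψ := by ext j <;> simp [sharp, add_comm]
  map_smul' r φ := by ext j <;> simp [sharp]

@[simp]
theorem sharpₗ_apply (φ : Module.Dual ℝ (V n)) : sharpₗ n φ = sharp n φ := rfl

theorem dual_eq_sum_dp_dq (ψ : Module.Dual ℝ (V n)) :
    ψ = ∑ j, (ψ (Pi.single j 1, 0) • dp n j + ψ (0, Pi.single j 1) • dq n j) := by
  ext i <;> simp [dp, dq, Pi.single_apply]

theorem contractLeft_eval_sharp_omega (μ : Module.Dual ℝ (V n)) :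
    contractLeft (Module.Dual.eval ℝ (V n) (sharp n μ)) (omega n) = -ι ℝ μ := by
  conv_rhs => rw [dual_eq_sum_dp_dq n μ]
  simp only [omega, map_sum, ExteriorAlgebra.contractLeft_ι_mul_ι]
  rw [← Finset.sum_neg_distrib]
  refine Finset.sum_congr rfl fun j _ => ?_
  simp only [Module.Dual.eval_apply, sharp, dp, dq, LinearMap.coe_comp, Function.comp_apply,
    LinearMap.fst_apply, LinearMap.snd_apply, LinearMap.coe_proj, Function.eval, map_add, map_smul]
  module

theorem omega_mem_exteriorPower_two : omega n ∈ ⋀[ℝ]^2 (Module.Dual ℝ (V n)) := by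
  rw [exteriorPower, pow_two]
  exact Submodule.sum_mem _ fun j _ =>
    Submodule.mul_mem_mul (LinearMap.mem_range_self _ _) (LinearMap.mem_range_self _ _)

theorem finrank_dual_V : Module.finrank ℝ (Module.Dual ℝ (V n)) = 2 * n := by
  simp [Subspace.dual_finrank_eq, Module.finrank_prod, two_mul]

theorem mul_omega_pow_eq_zero {N m : ℕ} {x : ExteriorAlgebra ℝ (Module.Dual ℝ (V n))}
    (hx : x ∈ ⋀[ℝ]^N (Module.Dual ℝ (V n))) (h : 2 * n < N + 2 * m) : x * omega n ^ m = 0 := by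
  have hω : omega n ^ m ∈ ⋀[ℝ]^(2 * m) (Module.Dual ℝ (V n)) := by
    rw [exteriorPower, pow_mul]
    exact Submodule.pow_mem_pow _ (omega_mem_exteriorPower_two n) m
  have := Submodule.mul_mem_mul hx hω
  rwa [← pow_add, ← exteriorPower,
    exteriorPower.eq_bot_of_finrank_lt (by rwa [finrank_dual_V]), Submodule.mem_bot] at this

theorem contractLeft_ιMulti_mul_omega_pow_succ {N : ℕ} (v : Fin N → Module.Dual ℝ (V n))
    (μ : Module.Dual ℝ (V n)) (hv : ∀ i, v i (sharp n μ) = 0) (m : ℕ) :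
    contractLeft (Module.Dual.eval ℝ (V n) (sharp n μ)) (ιMulti ℝ N v * omega n ^ (m + 1)) =
      -((-1 : ℝ) ^ N • (m + 1) • (ιMulti ℝ N v * ι ℝ μ * omega n ^ m)) := by
  have hcomm : Commute (omega n) (ι ℝ μ) := by
    show omega n * ι ℝ μ = ι ℝ μ * omega n
    simpa using mul_ι_of_mem_exteriorPower (omega_mem_exteriorPower_two n) μ
  rw [contractLeft_ιMulti_mul, contractLeft_ιMulti_eq_zero _ hv, zero_mul, zero_add,
    contractLeft_pow_succ_of_mem_exteriorPower_two _ (omega_mem_exteriorPower_two n)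
      (by rw [contractLeft_eval_sharp_omega]; exact hcomm.neg_right), contractLeft_eval_sharp_omega]
  simp only [mul_smul_comm, neg_mul, mul_neg, smul_neg, mul_assoc]

section Dirac

variable {N : ℕ} (ϑ : Fin N → Module.Dual ℝ (V n)) (c : Matrix (Fin N) (Fin N) ℝ)

def diracCovector (φ : Module.Dual ℝ (V n)) : Module.Dual ℝ (V n) :=
  φ - ∑ i, ∑ j, (pb n φ (ϑ i) * c i j) • ϑ j

theorem pb_diracCovector_left (φ ψ : Module.Dual ℝ (V n)) :
    pb n (diracCovector n ϑ c φ) ψ =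
      pb n φ ψ - ∑ i, ∑ j, pb n φ (ϑ i) * c i j * pb n (ϑ j) ψ := by
  simp only [pb, diracCovector, ← sharpₗ_apply, map_sub, map_sum, map_smul, smul_eq_mul]

theorem pb_diracCovector_constraint (hcC : c * Matrix.of (fun i j => pb n (ϑ i) (ϑ j)) = 1)
    (φ : Module.Dual ℝ (V n)) (l : Fin N) : pb n (diracCovector n ϑ c φ) (ϑ l) = 0 := by
  have hinv : ∀ i, ∑ j, c i j * pb n (ϑ j) (ϑ l) = if i = l then 1 else 0 := fun i => by
    simpa [Matrix.mul_apply, Matrix.one_apply] using congrFun (congrFun hcC i) l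
  simp only [pb_diracCovector_left, mul_assoc, ← Finset.mul_sum, hinv, mul_ite, mul_one, mul_zero,
    Finset.sum_ite_eq', Finset.mem_univ, if_true, sub_self]

theorem ιMulti_mul_ι_diracCovector (φ : Module.Dual ℝ (V n)) :
    ιMulti ℝ N ϑ * ι ℝ (diracCovector n ϑ c φ) = ιMulti ℝ N ϑ * ι ℝ φ := by
  have hspan : ∑ i, ∑ j, (pb n φ (ϑ i) * c i j) • ϑ j ∈ Submodule.span ℝ (Set.range ϑ) :=
    Submodule.sum_mem _ fun i _ => Submodule.sum_mem _ fun j _ =>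
      Submodule.smul_mem _ _ (Submodule.subset_span ⟨j, rfl⟩)
  rw [diracCovector, map_sub, mul_sub, ιMulti_mul_ι_eq_zero_of_mem_span ϑ hspan, sub_zero]

end Dirac

theorem dirac_bracket_form_identity (k : ℕ) (hkn : k < n)
    (φ γ : Module.Dual ℝ (V n)) (ϑ : Fin (2 * k) → Module.Dual ℝ (V n))
    (c : Matrix (Fin (2 * k)) (Fin (2 * k)) ℝ)
    (hcC : c * (Matrix.of fun i j => pb n (ϑ i) (ϑ j)) = 1) :
    -- the 2k-form dθ₁ ∧ ⋯ ∧ dθ_{2k} :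
    let θprod : ExteriorAlgebra ℝ (Module.Dual ℝ (V n)) :=
      (List.ofFn fun i => ExteriorAlgebra.ι ℝ (ϑ i)).prod
    -- the Dirac bracket {f,g}_D at the point:
    let D : ℝ := pb n φ γ - ∑ i, ∑ j, pb n φ (ϑ i) * c i j * pb n (ϑ j) γ
    ((n - k : ℕ) : ℝ) •
        (ExteriorAlgebra.ι ℝ φ * ExteriorAlgebra.ι ℝ γ * θprod * omega n ^ (n - k - 1)) =
      D • (θprod * omega n ^ (n - k)) := by
  intro θprod D
  obtain ⟨m, hm⟩ : ∃ m, n - k = m + 1 := ⟨n - k - 1, by omega⟩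
  rw [hm, Nat.add_sub_cancel, Nat.cast_smul_eq_nsmul]
  set μ := diracCovector n ϑ c φ
  have hθprod : θprod = ιMulti ℝ (2 * k) ϑ := rfl
  have hD : γ (sharp n μ) = D := pb_diracCovector_left n ϑ c φ γ
  have htangent : ∀ i, ϑ i (sharp n μ) = 0 := pb_diracCovector_constraint n ϑ c hcC φ
  have hswap : θprod * ι ℝ φ = ι ℝ φ * θprod := by
    rw [hθprod, ιMulti_mul_ι, pow_mul, neg_one_sq, one_pow, one_smul]
  have htop : ι ℝ γ * (θprod * omega n ^ (m + 1)) = 0 := by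
    rw [← mul_assoc]
    refine mul_omega_pow_eq_zero n ?_ (by omega : 2 * n < 1 + 2 * k + 2 * (m + 1))
    rw [exteriorPower, pow_add, pow_one]
    exact Submodule.mul_mem_mul (LinearMap.mem_range_self _ _) (ιMulti_range ℝ _ ⟨ϑ, rfl⟩)
  have hcontract := congrArg (contractLeft (Module.Dual.eval ℝ (V n) (sharp n μ))) htop
  rw [contractLeft_ι_mul, hθprod, contractLeft_ιMulti_mul_omega_pow_succ n ϑ μ htangent,
    ιMulti_mul_ι_diracCovector, ← hθprod, hswap, map_zero] at hcontract
  have hanti : ι ℝ γ * (ι ℝ φ * θprod * omega n ^ m) =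
      -(ι ℝ φ * ι ℝ γ * θprod * omega n ^ m) := by
    simp only [← mul_assoc, ι_mul_ι_anticomm γ φ, neg_mul]
  rw [Module.Dual.eval_apply, hD, pow_mul, neg_one_sq, one_pow, one_smul, mul_neg,
    mul_smul_comm, hanti, smul_neg, neg_neg, sub_eq_zero] at hcontract
  exact hcontract.symm
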